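/- arXiv:0710.3728 — 6 statements merged into one kernel-verified Lean document; each statement's English description precedes it below -/
import Mathlib

section
/- Let K be a real m×n matrix, y ∈ ℝᵐ, λ ≥ 0, and F(x) = ‖Kx - y‖² + 2λ‖x‖₁. A vector x̄ ∈ ℝⁿ minimizes F if and only if for every index i: (Kᵀ(y - Kx̄))ᵢ = λ·sign(x̄ᵢ) whenever x̄ᵢ ≠ 0, and |(Kᵀ(y - Kx̄))ᵢ| ≤ λ whenever x̄ᵢ = 0. -/
-- squeeze helper: if u ≤ ε v for all small ε > 0, then u ≤ 0
private lemma squeeze_aux (u v B : ℝ) (hv : 0 ≤ v) (hB : 0 < B)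
    (h : ∀ ε : ℝ, 0 < ε → ε ≤ B → u ≤ ε * v) : u ≤ 0 := by
  by_contra hu
  push_neg at hu
  rcases eq_or_lt_of_le hv with h0 | h0
  · have := h B hB le_rfl
    nlinarith
  · have hε : 0 < min B (u / (2 * v)) := lt_min hB (by positivity)
    have h1 := h _ hε (min_le_left _ _)
    have h2 : min B (u / (2 * v)) ≤ u / (2 * v) := min_le_right _ _
    have h3 : min B (u / (2 * v)) * v ≤ (u / (2 * v)) * v :=
      mul_le_mul_of_nonneg_right h2 hv
    have h4 : (u / (2 * v)) * v = u / 2 := by field_simp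
    linarith

theorem lasso_kkt {m n : ℕ} (K : Matrix (Fin m) (Fin n) ℝ) (y : Fin m → ℝ)
    (lam : ℝ) (hlam : 0 ≤ lam) (xbar : Fin n → ℝ) :
    (∀ x : Fin n → ℝ,
        (∑ j, (K.mulVec xbar j - y j) ^ 2) + 2 * lam * ∑ i, |xbar i| ≤
        (∑ j, (K.mulVec x j - y j) ^ 2) + 2 * lam * ∑ i, |x i|) ↔
    (∀ i : Fin n,
        (xbar i ≠ 0 →
          K.transpose.mulVec (y - K.mulVec xbar) i = lam * Real.sign (xbar i)) ∧
        (xbar i = 0 → |K.transpose.mulVec (y - K.mulVec xbar) i| ≤ lam)) := by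
  classical
  set g : Fin n → ℝ := K.transpose.mulVec (y - K.mulVec xbar) with hgdef
  have hgi : ∀ i, g i = -∑ j, K j i * (K.mulVec xbar j - y j) := by
    intro i
    simp only [hgdef, Matrix.mulVec, Matrix.transpose_apply, dotProduct, Pi.sub_apply]
    rw [← Finset.sum_neg_distrib]
    exact Finset.sum_congr rfl fun j _ => by ring
  have key : ∀ x : Fin n → ℝ,
      (∑ j, (K.mulVec x j - y j) ^ 2) =
        (∑ j, (K.mulVec xbar j - y j) ^ 2)
        - 2 * ∑ i, (x i - xbar i) * g i
        + ∑ j, (∑ i, K j i * (x i - xbar i)) ^ 2 := by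
    intro x
    have hsplit : ∀ j, K.mulVec x j - y j =
        (K.mulVec xbar j - y j) + ∑ i, K j i * (x i - xbar i) := by
      intro j
      simp only [Matrix.mulVec, dotProduct]
      rw [show (∑ i, K j i * (x i - xbar i)) = ∑ i, (K j i * x i - K j i * xbar i)
          from Finset.sum_congr rfl fun i _ => by ring, Finset.sum_sub_distrib]
      ring
    have cross : ∑ j, (K.mulVec xbar j - y j) * ∑ i, K j i * (x i - xbar i)
        = - ∑ i, (x i - xbar i) * g i := by
      have hj : ∀ j, (K.mulVec xbar j - y j) * ∑ i, K j i * (x i - xbar i)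
          = ∑ i, (x i - xbar i) * (K j i * (K.mulVec xbar j - y j)) := by
        intro j
        rw [Finset.mul_sum]
        exact Finset.sum_congr rfl fun i _ => by ring
      rw [Finset.sum_congr rfl fun j _ => hj j, Finset.sum_comm, ← Finset.sum_neg_distrib]
      refine Finset.sum_congr rfl fun i _ => ?_
      rw [← Finset.mul_sum, hgi i]
      ring
    calc ∑ j, (K.mulVec x j - y j) ^ 2
        = ∑ j, ((K.mulVec xbar j - y j) ^ 2
            + 2 * ((K.mulVec xbar j - y j) * ∑ i, K j i * (x i - xbar i))
            + (∑ i, K j i * (x i - xbar i)) ^ 2) := by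
          refine Finset.sum_congr rfl fun j _ => ?_
          rw [hsplit j]; ring
      _ = _ := by
          rw [Finset.sum_add_distrib, Finset.sum_add_distrib, ← Finset.mul_sum, cross]
          ring
  constructor
  · -- forward
    intro hmin i
    set c : ℝ := ∑ j, (K j i) ^ 2 with hcdef
    have hc : 0 ≤ c := Finset.sum_nonneg fun j _ => sq_nonneg _
    have base : ∀ t : ℝ,
        0 ≤ t ^ 2 * c - 2 * t * g i + 2 * lam * (|xbar i + t| - |xbar i|) := by
      intro t
      set x : Fin n → ℝ := Function.update xbar i (xbar i + t) with hxdef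
      have hmin' := hmin x
      rw [key x] at hmin'
      have h1 : ∑ i', (x i' - xbar i') * g i' = t * g i := by
        rw [Finset.sum_eq_single i]
        · simp [hxdef]
        · intro b _ hb; simp [hxdef, Function.update_of_ne hb]
        · intro h; exact absurd (Finset.mem_univ i) h
      have h2 : ∀ j, ∑ i', K j i' * (x i' - xbar i') = K j i * t := by
        intro j
        rw [Finset.sum_eq_single i]
        · simp [hxdef]
        · intro b _ hb; simp [hxdef, Function.update_of_ne hb]
        · intro h; exact absurd (Finset.mem_univ i) h
      have h3 : ∑ i', |x i'| - ∑ i', |xbar i'| = |xbar i + t| - |xbar i| := by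
        rw [← Finset.sum_sub_distrib, Finset.sum_eq_single i]
        · simp [hxdef]
        · intro b _ hb; simp [hxdef, Function.update_of_ne hb]
        · intro h; exact absurd (Finset.mem_univ i) h
      have h4 : ∑ j, (∑ i', K j i' * (x i' - xbar i')) ^ 2 = t ^ 2 * c := by
        rw [Finset.sum_congr rfl fun j _ => by rw [h2 j]]
        rw [hcdef, Finset.mul_sum]
        exact Finset.sum_congr rfl fun j _ => by ring
      rw [h1, h4] at hmin'
      have h5 : lam * (∑ i', |x i'|) - lam * (∑ i', |xbar i'|)
          = lam * (|xbar i + t| - |xbar i|) := by rw [← mul_sub, h3]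
      linarith
    constructor
    · -- xbar i ≠ 0 case
      intro hne
      have habs : ∀ t : ℝ, |t| ≤ |xbar i| →
          |xbar i + t| - |xbar i| = Real.sign (xbar i) * t := by
        intro t ht
        rcases lt_trichotomy (xbar i) 0 with h | h | h
        · rw [Real.sign_of_neg h]
          rw [abs_of_neg h] at ht ⊢
          rw [abs_of_nonpos (by linarith [le_abs_self t])]
          ring
        · exact absurd h hne
        · rw [Real.sign_of_pos h]
          rw [abs_of_pos h] at ht ⊢
          rw [abs_of_nonneg (by linarith [neg_abs_le t])]
          ring
      have key2 : ∀ t : ℝ, |t| ≤ |xbar i| →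
          0 ≤ t ^ 2 * c + 2 * t * (lam * Real.sign (xbar i) - g i) := by
        intro t ht
        have := base t
        rw [habs t ht] at this
        linarith
      set a : ℝ := lam * Real.sign (xbar i) - g i with hadef
      have hxpos : 0 < |xbar i| := abs_pos.mpr hne
      have ha0 : |a| ≤ 0 := by
        refine squeeze_aux _ (c / 2) (|xbar i|) (by linarith) hxpos ?_
        intro ε hε hεB
        have h1 := key2 ε (by rwa [abs_of_pos hε])
        have h2 := key2 (-ε) (by rwa [abs_neg, abs_of_pos hε])
        rcases abs_cases a with ⟨h, _⟩ | ⟨h, _⟩ <;> nlinarith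
      have : a = 0 := abs_eq_zero.mp (le_antisymm ha0 (abs_nonneg a))
      rw [hadef, sub_eq_zero] at this
      exact this.symm
    · -- xbar i = 0 case
      intro h0
      have base' : ∀ t : ℝ, 0 ≤ t ^ 2 * c - 2 * t * g i + 2 * lam * |t| := by
        intro t
        have := base t
        rw [h0] at this
        simpa using this
      have : |g i| - lam ≤ 0 := by
        refine squeeze_aux _ (c / 2) 1 (by linarith) one_pos ?_
        intro ε hε _
        rcases abs_cases (g i) with ⟨h, _⟩ | ⟨h, _⟩
        · have := base' ε
          rw [abs_of_pos hε] at this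
          nlinarith
        · have := base' (-ε)
          rw [abs_neg, abs_of_pos hε] at this
          nlinarith
      linarith
  · -- backward
    intro h x
    rw [key x]
    have hsq : 0 ≤ ∑ j, (∑ i, K j i * (x i - xbar i)) ^ 2 :=
      Finset.sum_nonneg fun j _ => sq_nonneg _
    have hterm : ∀ i, (x i - xbar i) * g i ≤ lam * |x i| - lam * |xbar i| := by
      intro i
      rcases eq_or_ne (xbar i) 0 with h0 | h0
      · have hgle := (h i).2 h0
        rw [h0]
        have h1 : (x i - 0) * g i ≤ |x i| * |g i| := by
          calc (x i - 0) * g i ≤ |(x i - 0) * g i| := le_abs_self _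
            _ = |x i| * |g i| := by rw [abs_mul, sub_zero]
        have h2 : |x i| * |g i| ≤ |x i| * lam :=
          mul_le_mul_of_nonneg_left hgle (abs_nonneg _)
        simp only [abs_zero]
        nlinarith
      · have hs := (h i).1 h0
        rcases lt_trichotomy (xbar i) 0 with hlt | heq | hgt
        · rw [Real.sign_of_neg hlt] at hs
          rw [hs, abs_of_neg hlt]
          have := mul_le_mul_of_nonneg_left (neg_abs_le (x i)) hlam
          nlinarith
        · exact absurd heq h0
        · rw [Real.sign_of_pos hgt] at hs
          rw [hs, abs_of_pos hgt]
          have := mul_le_mul_of_nonneg_left (le_abs_self (x i)) hlam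
          nlinarith
    have hsum : ∑ i, (x i - xbar i) * g i ≤ ∑ i, (lam * |x i| - lam * |xbar i|) :=
      Finset.sum_le_sum fun i _ => hterm i
    rw [Finset.sum_sub_distrib, ← Finset.mul_sum, ← Finset.mul_sum] at hsum
    linarith
end

section
/- Let K be a real m×n matrix, y ∈ ℝᵐ, λ ≥ 0. A vector x̄ minimizes F(x) = ‖Kx - y‖² + 2λ‖x‖₁ if and only if x̄ satisfies the fixed-point equation x̄ = S_λ(x̄ + Kᵀ(y - Kx̄)), where S_λ is componentwise soft-thresholding. -/
lemma small_pos (c a δ : ℝ) (hδ : 0 < δ) (h : ∀ t : ℝ, 0 < t → t ≤ δ → 0 ≤ c * t + a) : 0 ≤ a := by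
  by_contra ha
  push_neg at ha
  have hc1 : (0:ℝ) < |c| + 1 := by positivity
  have hq : 0 < -a / (|c| + 1) := div_pos (neg_pos.mpr ha) hc1
  set t := min δ (-a / (|c| + 1)) with ht
  have htpos : 0 < t := lt_min hδ hq
  have htle : t ≤ δ := min_le_left _ _
  have ht2 : t ≤ -a / (|c| + 1) := min_le_right _ _
  have h0 := h t htpos htle
  have hct : c * t ≤ |c| * t := mul_le_mul_of_nonneg_right (le_abs_self c) htpos.le
  have h3 : |c| * t ≤ |c| * (-a / (|c| + 1)) :=
    mul_le_mul_of_nonneg_left ht2 (abs_nonneg c)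
  have h4 : |c| * (-a / (|c| + 1)) < -a := by
    rw [mul_div_assoc', div_lt_iff₀ hc1]
    nlinarith [abs_nonneg c]
  linarith

noncomputable def softThreshold (lam u : ℝ) : ℝ :=
  if lam < u then u - lam else if u < -lam then u + lam else 0

lemma fp_iff_kkt (lam : ℝ) (hlam : 0 ≤ lam) (a g : ℝ) :
    a = softThreshold lam (a + g) ↔ (|g| ≤ lam ∧ g * a = lam * |a|) := by
  unfold softThreshold
  constructor
  · intro h
    split_ifs at h with h1 h2
    · have hgl : g = lam := by linarith
      have hx : 0 < a := by linarith
      refine ⟨by rw [hgl, abs_of_nonneg hlam], ?_⟩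
      rw [hgl, abs_of_pos hx, mul_comm]
    · have hgl : g = -lam := by linarith
      have hx : a < 0 := by linarith
      refine ⟨by rw [hgl, abs_neg, abs_of_nonneg hlam], ?_⟩
      rw [hgl, abs_of_neg hx]; ring
    · push_neg at h1 h2
      subst h
      rw [zero_add] at h1 h2
      refine ⟨abs_le.mpr ⟨by linarith, h1⟩, by simp⟩
  · rintro ⟨habs, hprod⟩
    rcases lt_trichotomy a 0 with hx | hx | hx
    · have hgl : g = -lam := by
        have : g * a = -lam * a := by rw [hprod, abs_of_neg hx]; ring
        have := mul_right_cancel₀ (ne_of_lt hx) this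
        linarith [this]
      rw [hgl, if_neg (by linarith), if_pos (by linarith)]
      ring
    · subst hx
      obtain ⟨hl, hr⟩ := abs_le.mp habs
      rw [zero_add, if_neg (by linarith), if_neg (by linarith)]
    · have hgl : g = lam := by
        have : g * a = lam * a := by rw [hprod, abs_of_pos hx]
        exact mul_right_cancel₀ (ne_of_gt hx) this
      rw [hgl, if_pos (by linarith)]
      ring

lemma expansion {m n : ℕ} (K : Matrix (Fin m) (Fin n) ℝ) (y : Fin m → ℝ) (lam : ℝ)
    (xbar x : Fin n → ℝ) :
    (∑ j, (K.mulVec x j - y j) ^ 2) + 2 * lam * ∑ i, |x i| =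
      ((∑ j, (K.mulVec xbar j - y j) ^ 2) + 2 * lam * ∑ i, |xbar i|)
      + (∑ j, (K.mulVec x j - K.mulVec xbar j) ^ 2)
      + ∑ i, (2 * lam * |x i| - 2 * lam * |xbar i|
          - 2 * (K.transpose.mulVec (y - K.mulVec xbar) i) * (x i - xbar i)) := by
  have hswap : ∑ i, (K.transpose.mulVec (y - K.mulVec xbar) i) * (x i - xbar i)
      = ∑ j, (y j - K.mulVec xbar j) * (K.mulVec x j - K.mulVec xbar j) := by
    simp only [Matrix.mulVec, Matrix.transpose_apply, dotProduct, Pi.sub_apply,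
      Finset.sum_mul, Finset.mul_sum, ← Finset.sum_sub_distrib]
    rw [Finset.sum_comm]
    exact Finset.sum_congr rfl fun j _ => Finset.sum_congr rfl fun i _ => by ring
  have h1 : ∑ j, (K.mulVec x j - y j) ^ 2 =
      (∑ j, (K.mulVec xbar j - y j) ^ 2) + (∑ j, (K.mulVec x j - K.mulVec xbar j) ^ 2)
      - 2 * ∑ j, (y j - K.mulVec xbar j) * (K.mulVec x j - K.mulVec xbar j) := by
    rw [Finset.mul_sum, ← Finset.sum_add_distrib, ← Finset.sum_sub_distrib]
    exact Finset.sum_congr rfl fun j _ => by ring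
  have h2 : ∑ i, (2 * lam * |x i| - 2 * lam * |xbar i|
          - 2 * (K.transpose.mulVec (y - K.mulVec xbar) i) * (x i - xbar i))
      = 2 * lam * (∑ i, |x i|) - 2 * lam * (∑ i, |xbar i|)
        - 2 * ∑ i, (K.transpose.mulVec (y - K.mulVec xbar) i) * (x i - xbar i) := by
    simp only [Finset.mul_sum, ← Finset.sum_sub_distrib]
    exact Finset.sum_congr rfl fun i _ => by ring
  rw [h1, h2, hswap]
  ring

theorem lasso_fixed_point {m n : ℕ} (K : Matrix (Fin m) (Fin n) ℝ) (y : Fin m → ℝ)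
    (lam : ℝ) (hlam : 0 ≤ lam) (xbar : Fin n → ℝ) :
    (∀ x : Fin n → ℝ,
        (∑ j, (K.mulVec xbar j - y j) ^ 2) + 2 * lam * ∑ i, |xbar i| ≤
        (∑ j, (K.mulVec x j - y j) ^ 2) + 2 * lam * ∑ i, |x i|) ↔
    (∀ i : Fin n,
        xbar i = softThreshold lam (xbar i + K.transpose.mulVec (y - K.mulVec xbar) i)) := by
  set g : Fin n → ℝ := K.transpose.mulVec (y - K.mulVec xbar) with hg
  constructor
  · intro hmin i
    rw [fp_iff_kkt lam hlam]
    -- perturbation inequality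
    have hP : ∀ t : ℝ, 0 ≤ t ^ 2 * (∑ j, (K j i) ^ 2)
        + (2 * lam * |xbar i + t| - 2 * lam * |xbar i| - 2 * g i * t) := by
      intro t
      have hx := hmin (Function.update xbar i (xbar i + t))
      rw [expansion K y lam xbar (Function.update xbar i (xbar i + t))] at hx
      have hd : ∀ j, K.mulVec (Function.update xbar i (xbar i + t)) j - K.mulVec xbar j
          = t * K j i := by
        intro j
        simp only [Matrix.mulVec, dotProduct, ← Finset.sum_sub_distrib]
        rw [Finset.sum_eq_single i]
        · rw [Function.update_self]; ring
        · intro b _ hb; rw [Function.update_of_ne hb]; ring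
        · simp
      have hsq : ∑ j, (K.mulVec (Function.update xbar i (xbar i + t)) j - K.mulVec xbar j) ^ 2
          = t ^ 2 * ∑ j, (K j i) ^ 2 := by
        rw [Finset.mul_sum]
        exact Finset.sum_congr rfl fun j _ => by rw [hd j]; ring
      have hsum : ∑ i', (2 * lam * |Function.update xbar i (xbar i + t) i'|
            - 2 * lam * |xbar i'| - 2 * g i' * (Function.update xbar i (xbar i + t) i' - xbar i'))
          = 2 * lam * |xbar i + t| - 2 * lam * |xbar i| - 2 * g i * t := by
        rw [Finset.sum_eq_single i]
        · rw [Function.update_self]; ring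
        · intro b _ hb; rw [Function.update_of_ne hb]; ring
        · simp
      rw [hsq, hsum] at hx
      linarith
    set c := ∑ j, (K j i) ^ 2 with hc
    rcases lt_trichotomy (xbar i) 0 with hx | hx | hx
    · -- need g i = -lam
      have h1 : g i + lam ≤ 0 := by
        have := small_pos c (-2 * (g i + lam)) (-xbar i) (by linarith) (fun t htpos htle => by
          have := hP t
          rw [abs_of_neg hx, abs_of_nonpos (by linarith : xbar i + t ≤ 0)] at this
          nlinarith)
        linarith
      have h2 : 0 ≤ g i + lam := by
        have := small_pos c (2 * (g i + lam)) (-xbar i) (by linarith) (fun t htpos htle => by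
          have := hP (-t)
          rw [abs_of_neg hx, abs_of_nonpos (by linarith : xbar i + -t ≤ 0)] at this
          nlinarith)
        linarith
      have hgl : g i = -lam := by linarith
      refine ⟨by rw [hgl, abs_neg, abs_of_nonneg hlam], ?_⟩
      rw [hgl, abs_of_neg hx]; ring
    · -- xbar i = 0 : need |g i| ≤ lam
      have h1 : g i ≤ lam := by
        have := small_pos c (2 * (lam - g i)) 1 one_pos (fun t htpos htle => by
          have := hP t
          rw [hx, zero_add, abs_of_pos htpos, abs_zero] at this
          nlinarith)
        linarith
      have h2 : -lam ≤ g i := by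
        have := small_pos c (2 * (lam + g i)) 1 one_pos (fun t htpos htle => by
          have := hP (-t)
          rw [hx, zero_add, abs_neg, abs_of_pos htpos, abs_zero] at this
          nlinarith)
        linarith
      refine ⟨abs_le.mpr ⟨h2, h1⟩, by rw [hx, abs_zero]; ring⟩
    · -- xbar i > 0 : need g i = lam
      have h1 : lam - g i ≤ 0 := by
        have := small_pos c (-2 * (lam - g i)) (xbar i) hx (fun t htpos htle => by
          have := hP (-t)
          rw [abs_of_pos hx, abs_of_nonneg (by linarith : 0 ≤ xbar i + -t)] at this
          nlinarith)
        linarith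
      have h2 : 0 ≤ lam - g i := by
        have := small_pos c (2 * (lam - g i)) 1 one_pos (fun t htpos htle => by
          have := hP t
          rw [abs_of_pos hx, abs_of_pos (by linarith : 0 < xbar i + t)] at this
          nlinarith)
        linarith
      have hgl : g i = lam := by linarith
      refine ⟨by rw [hgl, abs_of_nonneg hlam], ?_⟩
      rw [hgl, abs_of_pos hx, mul_comm]
  · intro hfp x
    rw [expansion K y lam xbar x]
    have hterm : ∀ i, 0 ≤ 2 * lam * |x i| - 2 * lam * |xbar i| - 2 * g i * (x i - xbar i) := by
      intro i
      obtain ⟨habs, hprod⟩ := (fp_iff_kkt lam hlam (xbar i) (g i)).mp (hfp i)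
      have h1 : g i * x i ≤ lam * |x i| := by
        calc g i * x i ≤ |g i * x i| := le_abs_self _
          _ = |g i| * |x i| := abs_mul _ _
          _ ≤ lam * |x i| := mul_le_mul_of_nonneg_right habs (abs_nonneg _)
      nlinarith
    have hsq : 0 ≤ ∑ j, (K.mulVec x j - K.mulVec xbar j) ^ 2 :=
      Finset.sum_nonneg fun j _ => sq_nonneg _
    have hs2 : 0 ≤ ∑ i, (2 * lam * |x i| - 2 * lam * |xbar i| - 2 * g i * (x i - xbar i)) :=
      Finset.sum_nonneg fun i _ => hterm i
    linarith
end

section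
/- If x̄ minimizes F(x) = ‖Kx - y‖² + 2λ‖x‖₁ with λ > 0 and x̄ ≠ 0, then λ = ‖Kᵀ(y - Kx̄)‖_∞ = maxᵢ |(Kᵀ(y - Kx̄))ᵢ|. -/
lemma quad_le_zero (a h δ : ℝ) (ha : 0 ≤ a) (hδ : 0 < δ)
    (H : ∀ s : ℝ, 0 < s → s ≤ δ → 2*s*h ≤ s^2*a) : h ≤ 0 := by
  by_contra hc
  push_neg at hc
  set s := min δ (h/(a+1)) with hs
  have hs0 : 0 < s := lt_min hδ (by positivity)
  have hsδ : s ≤ δ := min_le_left _ _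
  have hsh : s ≤ h/(a+1) := min_le_right _ _
  have h1 := H s hs0 hsδ
  have h2 : s * (a+1) ≤ h := by
    rw [← div_mul_cancel₀ h (by positivity : (a:ℝ)+1 ≠ 0)]
    exact mul_le_mul_of_nonneg_right hsh (by positivity)
  nlinarith [mul_pos hs0 hc, mul_nonneg (mul_pos hs0 hc).le ha]

lemma aux_key (a lam c g : ℝ) (ha : 0 ≤ a) (hlam : 0 < lam)
    (h : ∀ t : ℝ, 0 ≤ t^2*a - 2*t*g + 2*lam*(|c+t| - |c|)) :
    |g| ≤ lam ∧ (c ≠ 0 → |g| = lam) := by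
  have habs : ∀ t : ℝ, |c + t| - |c| ≤ |t| := fun t => by
    have := abs_add_le c t; linarith
  have hle : |g| ≤ lam := by
    have H : ∀ s : ℝ, 0 < s → s ≤ 1 → 2*s*(|g| - lam) ≤ s^2*a := by
      intro s hs _
      rcases le_or_gt 0 g with hg | hg
      · have h1 := h s
        have h2 : |c + s| - |c| ≤ s := by
          have := habs s; rwa [abs_of_pos hs] at this
        rw [abs_of_nonneg hg]; nlinarith
      · have h1 := h (-s)
        have h2 : |c + (-s)| - |c| ≤ s := by
          have := habs (-s); rwa [abs_neg, abs_of_pos hs] at this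
        rw [abs_of_neg hg]; nlinarith
    linarith [quad_le_zero a (|g| - lam) 1 ha one_pos H]
  refine ⟨hle, fun hc => ?_⟩
  have hcpos : 0 < |c| := abs_pos.mpr hc
  set σ : ℝ := if c < 0 then -1 else 1 with hσ
  have hσc : c = σ * |c| := by
    rcases lt_or_ge c 0 with h' | h'
    · simp [hσ, h', abs_of_neg h']
    · simp [hσ, not_lt.mpr h', abs_of_nonneg h']
  have hσ2 : σ * σ = 1 := by
    rcases lt_or_ge c 0 with h' | h' <;> simp [hσ, h', not_lt.mpr]
  have hσabs : |σ| = 1 := by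
    rcases lt_or_ge c 0 with h' | h' <;> simp [hσ, h', not_lt.mpr]
  have hkey : ∀ s : ℝ, -|c| ≤ s → 0 ≤ s^2*a - 2*s*(σ*g) + 2*lam*s := by
    intro s hs
    have h1 := h (s * σ)
    have h2 : c + s * σ = σ * (|c| + s) := by nth_rewrite 1 [hσc]; ring
    have h3 : |c + s * σ| = |c| + s := by
      rw [h2, abs_mul, hσabs, one_mul, abs_of_nonneg (by linarith)]
    rw [h3] at h1
    have h4 : (s*σ)^2 = s^2 := by nlinarith
    nlinarith
  set h0 := σ * g - lam with hh0
  have hp : h0 ≤ 0 := by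
    apply quad_le_zero a h0 1 ha one_pos
    intro s hs _
    have := hkey s (by linarith [abs_nonneg c])
    nlinarith
  have hn : -h0 ≤ 0 := by
    apply quad_le_zero a (-h0) (|c|) ha hcpos
    intro s hs hsc
    have := hkey (-s) (by linarith)
    nlinarith
  have h0z : σ * g = lam := by simp only [hh0] at hp hn; linarith
  have : |g| = |σ * g| := by rw [abs_mul, hσabs, one_mul]
  rw [this, h0z, abs_of_pos hlam]

theorem lasso_penalty_eq_sup_remainder {m n : ℕ} (K : Matrix (Fin m) (Fin n) ℝ)
    (y : Fin m → ℝ) (lam : ℝ) (hlam : 0 < lam) (xbar : Fin n → ℝ)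
    (hmin : ∀ x : Fin n → ℝ,
        (∑ j, (K.mulVec xbar j - y j) ^ 2) + 2 * lam * ∑ i, |xbar i| ≤
        (∑ j, (K.mulVec x j - y j) ^ 2) + 2 * lam * ∑ i, |x i|)
    (hne : xbar ≠ 0) :
    lam = ⨆ i : Fin n, |K.transpose.mulVec (y - K.mulVec xbar) i| := by
  have key : ∀ (i : Fin n) (t : ℝ),
      0 ≤ t^2 * (∑ j, (K j i)^2) - 2*t*(K.transpose.mulVec (y - K.mulVec xbar) i) +
        2*lam*(|xbar i + t| - |xbar i|) := by
    intro i t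
    set x : Fin n → ℝ := fun k => xbar k + if k = i then t else 0 with hx
    have hmv : ∀ j, K.mulVec x j = K.mulVec xbar j + t * K j i := by
      intro j
      simp only [Matrix.mulVec, dotProduct, hx, mul_add, Finset.sum_add_distrib,
        mul_ite, mul_zero]
      rw [Finset.sum_ite_eq' Finset.univ i (fun k => K j k * t)]
      simp [mul_comm]
    have habs : ∑ k, |x k| = (∑ k, |xbar k|) - |xbar i| + |xbar i + t| := by
      have hterm : ∀ k, |x k| = |xbar k| + (if k = i then |xbar i + t| - |xbar i| else 0) := by
        intro k
        by_cases hk : k = i <;> simp [hx, hk]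
      rw [Finset.sum_congr rfl (fun k _ => hterm k), Finset.sum_add_distrib,
        Finset.sum_ite_eq' Finset.univ i (fun _ => |xbar i + t| - |xbar i|)]
      simp only [Finset.mem_univ, if_true]
      ring
    have hm := hmin x
    have hmv2 : ∑ j, (K.mulVec x j - y j)^2
        = ∑ j, (K.mulVec xbar j - y j + t * K j i)^2 := by
      exact Finset.sum_congr rfl fun j _ => by rw [hmv j]; ring
    have expand : ∑ j, (K.mulVec xbar j - y j + t * K j i)^2
        = (∑ j, (K.mulVec xbar j - y j)^2) + 2*t*(∑ j, (K.mulVec xbar j - y j) * K j i)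
          + t^2 * ∑ j, (K j i)^2 := by
      rw [Finset.mul_sum, Finset.mul_sum, ← Finset.sum_add_distrib, ← Finset.sum_add_distrib]
      exact Finset.sum_congr rfl fun j _ => by ring
    have hg : K.transpose.mulVec (y - K.mulVec xbar) i
        = -∑ j, (K.mulVec xbar j - y j) * K j i := by
      rw [← Finset.sum_neg_distrib]
      simp only [Matrix.mulVec, dotProduct, Matrix.transpose_apply, Pi.sub_apply]
      exact Finset.sum_congr rfl fun j _ => by ring
    rw [hmv2, expand, habs] at hm
    rw [hg]
    nlinarith [hm]
  have haux : ∀ i : Fin n,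
      |K.transpose.mulVec (y - K.mulVec xbar) i| ≤ lam ∧
      (xbar i ≠ 0 → |K.transpose.mulVec (y - K.mulVec xbar) i| = lam) := by
    intro i
    exact aux_key (∑ j, (K j i)^2) lam (xbar i) _
      (Finset.sum_nonneg fun _ _ => sq_nonneg _) hlam (key i)
  obtain ⟨i0, hi0⟩ : ∃ i, xbar i ≠ 0 := Function.ne_iff.mp hne
  haveI : Nonempty (Fin n) := ⟨i0⟩
  apply le_antisymm
  · rw [← (haux i0).2 hi0]
    exact le_ciSup (f := fun i => |K.transpose.mulVec (y - K.mulVec xbar) i|) (Set.Finite.bddAbove (Set.finite_range _)) i0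
  · exact ciSup_le fun i => (haux i).1
end

section
/- If λ ≥ λ_max := ‖Kᵀy‖_∞ = maxᵢ |(Kᵀy)ᵢ|, then x = 0 is a minimizer of F(x) = ‖Kx - y‖² + 2λ‖x‖₁. Conversely, if x = 0 minimizes F then λ ≥ λ_max. -/
theorem lasso_zero_minimizer_iff {m n : ℕ} (K : Matrix (Fin m) (Fin n) ℝ)
    (y : Fin m → ℝ) (lam : ℝ) (hlam : 0 ≤ lam) :
    ((⨆ i : Fin n, |K.transpose.mulVec y i|) ≤ lam →
      ∀ x : Fin n → ℝ,
        (∑ j, (K.mulVec 0 j - y j) ^ 2) + 2 * lam * ∑ i, |(0 : Fin n → ℝ) i| ≤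
        (∑ j, (K.mulVec x j - y j) ^ 2) + 2 * lam * ∑ i, |x i|) ∧
    ((∀ x : Fin n → ℝ,
        (∑ j, (K.mulVec 0 j - y j) ^ 2) + 2 * lam * ∑ i, |(0 : Fin n → ℝ) i| ≤
        (∑ j, (K.mulVec x j - y j) ^ 2) + 2 * lam * ∑ i, |x i|) →
      (⨆ i : Fin n, |K.transpose.mulVec y i|) ≤ lam) := by
  set v := K.transpose.mulVec y with hvdef
  constructor
  · intro h x
    have hv : ∀ i, |v i| ≤ lam := fun i =>
      le_trans (le_ciSup (f := fun i => |v i|) (Set.Finite.bddAbove (Set.finite_range _)) i) h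
    simp only [Matrix.mulVec_zero, Pi.zero_apply, abs_zero, Finset.sum_const_zero,
      mul_zero, add_zero, zero_sub, neg_sq]
    have key : ∑ j, K.mulVec x j * y j ≤ lam * ∑ i, |x i| := by
      have h1 : ∑ j, K.mulVec x j * y j = ∑ i, v i * x i := by
        have : dotProduct (K.mulVec x) y = dotProduct (K.vecMul y) x := by
          rw [dotProduct_comm, Matrix.dotProduct_mulVec]
        simpa [dotProduct, hvdef, Matrix.mulVec_transpose] using this
      rw [h1, Finset.mul_sum]
      apply Finset.sum_le_sum
      intro i _
      calc v i * x i ≤ |v i * x i| := le_abs_self _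
        _ = |v i| * |x i| := abs_mul _ _
        _ ≤ lam * |x i| := by
            exact mul_le_mul_of_nonneg_right (hv i) (abs_nonneg _)
    have hs : ∑ j, (K.mulVec x j - y j) ^ 2 =
        ∑ j, ((K.mulVec x j) ^ 2 - 2 * (K.mulVec x j * y j) + y j ^ 2) := by
      apply Finset.sum_congr rfl; intros; ring
    have hnn : (0:ℝ) ≤ ∑ j, (K.mulVec x j) ^ 2 :=
      Finset.sum_nonneg fun j _ => sq_nonneg _
    rw [hs, Finset.sum_add_distrib, Finset.sum_sub_distrib, ← Finset.mul_sum]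
    linarith
  · intro h
    rcases isEmpty_or_nonempty (Fin n) with he | hne
    · rw [Real.iSup_of_isEmpty]; exact hlam
    · apply ciSup_le
      intro i
      set A := ∑ j, (K j i) ^ 2 with hAdef
      have hA : 0 ≤ A := Finset.sum_nonneg fun j _ => sq_nonneg _
      apply le_of_forall_pos_le_add
      intro ε hε
      set t := 2 * ε / (A + 1) with htdef
      have ht : 0 < t := by positivity
      set c := t * (if 0 ≤ v i then 1 else -1) with hcdef
      have habs : |c| = t := by
        rcases le_or_gt 0 (v i) with hvi | hvi
        · simp [hcdef, hvi, abs_of_pos ht]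
        · rw [hcdef, if_neg (not_le.mpr hvi)]
          simp [abs_of_pos ht]
      have hcv : c * v i = t * |v i| := by
        rcases le_or_gt 0 (v i) with hvi | hvi
        · simp [hcdef, hvi, abs_of_nonneg hvi]
        · rw [hcdef, if_neg (not_le.mpr hvi), abs_of_neg hvi]; ring
      have hx := h (Pi.single i c)
      have hmv : ∀ j, K.mulVec (Pi.single i c) j = K j i * c := by
        intro j
        simp [Matrix.mulVec_single]
      have hsum : ∑ k, |Pi.single i c k| = t := by
        rw [Finset.sum_eq_single i]
        · simp [habs]
        · intro b _ hb; simp [Pi.single_apply, hb]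
        · intro hi; exact absurd (Finset.mem_univ i) hi
      simp only [Matrix.mulVec_zero, Pi.zero_apply, abs_zero, Finset.sum_const_zero,
        mul_zero, add_zero, zero_sub, neg_sq, hsum] at hx
      have hvi : v i = ∑ j, K j i * y j := by
        simp [hvdef, Matrix.mulVec, dotProduct, Matrix.transpose_apply]
      have hexp : ∑ j, (K.mulVec (Pi.single i c) j - y j) ^ 2 =
          A * c ^ 2 - 2 * (c * v i) + ∑ j, y j ^ 2 := by
        rw [hvi, hAdef, Finset.sum_mul, Finset.mul_sum, Finset.mul_sum]
        rw [← Finset.sum_sub_distrib, ← Finset.sum_add_distrib]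
        apply Finset.sum_congr rfl
        intro j _
        rw [hmv j]; ring
      rw [hexp, hcv] at hx
      -- hx : ∑ y² ≤ A c² - 2 t |v i| + ∑ y² + 2 lam t
      have hc2 : c ^ 2 = t ^ 2 := by
        rw [← sq_abs, habs]
      rw [hc2] at hx
      have h2 : 2 * t * |v i| ≤ A * t ^ 2 + 2 * lam * t := by linarith
      have h3 : |v i| ≤ A * t / 2 + lam := by
        nlinarith [h2, ht, mul_pos ht ht]
      have h4 : A * t / 2 ≤ ε := by
        have hA1 : (0:ℝ) < A + 1 := by linarith
        rw [htdef, show A * (2 * ε / (A + 1)) / 2 = ε * A / (A + 1) by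
          field_simp]
        rw [div_le_iff₀ hA1]
        nlinarith
      linarith
end

section
/- For every x ∈ ℝⁿ and R ≥ 0, there exists τ ≥ 0 such that the projection of x onto the ℓ¹-ball of radius R equals the componentwise soft-thresholding S_τ(x); specifically, if ‖x‖₁ ≤ R one may take τ = 0, and otherwise τ > 0 is chosen so that ‖S_τ(x)‖₁ = R. -/
lemma soft_props (τ u : ℝ) (hτ : 0 ≤ τ) :
    (u - softThreshold τ u) * softThreshold τ u = τ * |softThreshold τ u| ∧
    |u - softThreshold τ u| ≤ τ := by
  unfold softThreshold
  split_ifs with h1 h2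
  · constructor
    · rw [abs_of_nonneg (by linarith)]; ring
    · rw [show u - (u - τ) = τ by ring, abs_of_nonneg hτ]
  · constructor
    · rw [abs_of_nonpos (by linarith)]; ring
    · rw [show u - (u + τ) = -τ by ring, abs_neg, abs_of_nonneg hτ]
  · constructor
    · simp
    · rw [sub_zero, abs_le]; constructor <;> linarith

lemma abs_soft (τ u : ℝ) (hτ : 0 ≤ τ) :
    |softThreshold τ u| = max (|u| - τ) 0 := by
  unfold softThreshold
  split_ifs with h1 h2
  · rw [abs_of_nonneg (by linarith), abs_of_nonneg (by linarith),
      max_eq_left (by linarith)]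
  · rw [abs_of_nonpos (by linarith), abs_of_nonpos (by linarith),
      max_eq_left (by linarith)]; ring
  · rw [abs_zero, eq_comm, max_eq_right]
    have : |u| ≤ τ := abs_le.mpr ⟨by linarith, by linarith⟩
    linarith

lemma soft_zero (u : ℝ) : softThreshold 0 u = u := by
  unfold softThreshold
  split_ifs with h1 h2
  · ring
  · ring
  · push_neg at h1 h2; linarith

lemma soft_opt {n : ℕ} (x : Fin n → ℝ) (τ : ℝ) (hτ : 0 ≤ τ) (u : Fin n → ℝ)
    (h : τ * (∑ i, |u i|) ≤ τ * (∑ i, |softThreshold τ (x i)|)) :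
    (∑ i, (x i - softThreshold τ (x i)) ^ 2) ≤ ∑ i, (x i - u i) ^ 2 := by
  set p : Fin n → ℝ := fun i => softThreshold τ (x i) with hp
  have key : ∀ i ∈ Finset.univ, (x i - p i) ^ 2 + 2 * (τ * |p i| - τ * |u i|)
      ≤ (x i - u i) ^ 2 := by
    intro i _
    obtain ⟨h1, h2⟩ := soft_props τ (x i) hτ
    have hb : (x i - p i) * u i ≤ τ * |u i| := by
      calc (x i - p i) * u i ≤ |(x i - p i) * u i| := le_abs_self _
        _ = |x i - p i| * |u i| := abs_mul _ _
        _ ≤ τ * |u i| := mul_le_mul_of_nonneg_right h2 (abs_nonneg _)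
    nlinarith [sq_nonneg (p i - u i)]
  have hsum := Finset.sum_le_sum key
  rw [Finset.sum_add_distrib] at hsum
  have e1 : (∑ i, 2 * (τ * |p i| - τ * |u i|))
      = 2 * (τ * (∑ i, |p i|) - τ * (∑ i, |u i|)) := by
    simp only [mul_sub, Finset.sum_sub_distrib, Finset.mul_sum]
  rw [e1] at hsum
  linarith

theorem projection_on_l1_ball_is_soft_threshold {n : ℕ} (x : Fin n → ℝ) (R : ℝ)
    (hR : 0 ≤ R) :
    ∃ τ : ℝ, 0 ≤ τ ∧
      (∑ i, |softThreshold τ (x i)|) ≤ R ∧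
      (∀ u : Fin n → ℝ, (∑ i, |u i|) ≤ R →
        (∑ i, (x i - softThreshold τ (x i)) ^ 2) ≤ ∑ i, (x i - u i) ^ 2) ∧
      ((∑ i, |x i|) ≤ R → τ = 0) ∧
      (R < (∑ i, |x i|) → 0 < τ ∧ (∑ i, |softThreshold τ (x i)|) = R) := by
  by_cases hc : (∑ i, |x i|) ≤ R
  · refine ⟨0, le_refl 0, ?_, ?_, fun _ => rfl, fun h => absurd h (not_lt.mpr hc)⟩
    · simpa [soft_zero] using hc
    · intro u hu
      exact soft_opt x 0 le_rfl u (by simp)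
  · push_neg at hc
    set M : ℝ := ∑ i, |x i| with hM
    set g : ℝ → ℝ := fun τ => ∑ i, max (|x i| - τ) 0 with hg
    have hgc : Continuous g := by
      apply continuous_finset_sum
      intro i _
      exact (continuous_const.sub continuous_id).max continuous_const
    have hg0 : g 0 = M := by
      simp only [hg, hM, sub_zero]
      exact Finset.sum_congr rfl fun i _ => max_eq_left (abs_nonneg _)
    have hgM : g M = 0 := by
      apply Finset.sum_eq_zero
      intro i _
      have : |x i| ≤ M := Finset.single_le_sum (fun j _ => abs_nonneg (x j))
        (Finset.mem_univ i)
      exact max_eq_right (by linarith)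
    have h0M : (0 : ℝ) ≤ M := hR.trans hc.le
    have hmem : R ∈ Set.Icc (g M) (g 0) := by
      rw [hg0, hgM]; exact ⟨hR, hc.le⟩
    obtain ⟨τ, hτmem, hτR⟩ := intermediate_value_Icc' h0M hgc.continuousOn hmem
    have hτ0 : 0 ≤ τ := hτmem.1
    have hτpos : 0 < τ := by
      rcases lt_or_eq_of_le hτ0 with h | h
      · exact h
      · exfalso; rw [← h] at hτR; rw [hg0] at hτR; linarith
    have habs : (∑ i, |softThreshold τ (x i)|) = R := by
      rw [← hτR]
      exact Finset.sum_congr rfl fun i _ => abs_soft τ (x i) hτ0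
    refine ⟨τ, hτ0, le_of_eq habs, ?_, fun h => absurd h (not_le.mpr hc),
      fun _ => ⟨hτpos, habs⟩⟩
    intro u hu
    apply soft_opt x τ hτ0 u
    rw [habs]
    exact mul_le_mul_of_nonneg_left hu hτ0
end

section
/- Suppose ‖K‖ ≤ 1. Then each iteration of the thresholded Landweber algorithm does not increase the objective: with x⁺ = S_λ(x + Kᵀ(y - Kx)), one has ‖Kx⁺ - y‖² + 2λ‖x⁺‖₁ ≤ ‖Kx - y‖² + 2λ‖x‖₁ for all x ∈ ℝⁿ. -/
lemma softThreshold_min (lam : ℝ) (hlam : 0 ≤ lam) (u z : ℝ) :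
    (softThreshold lam u - u)^2 + 2*lam*|softThreshold lam u| ≤ (z - u)^2 + 2*lam*|z| := by
  have h1 : z ≤ |z| := le_abs_self z
  have h2 : -z ≤ |z| := neg_le_abs z
  unfold softThreshold
  split_ifs with h h'
  · rw [abs_of_nonneg (by linarith)]
    nlinarith [sq_nonneg (z - u + lam), mul_nonneg hlam (by linarith : (0:ℝ) ≤ |z| - z),
      mul_nonneg hlam (by linarith : (0:ℝ) ≤ |z| + z)]
  · rw [abs_of_nonpos (by linarith)]
    nlinarith [sq_nonneg (z - u - lam), mul_nonneg hlam (by linarith : (0:ℝ) ≤ |z| - z),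
      mul_nonneg hlam (by linarith : (0:ℝ) ≤ |z| + z)]
  · push_neg at h h'
    have hzu : z * u ≤ |z| * lam := by
      calc z * u ≤ |z * u| := le_abs_self _
        _ = |z| * |u| := abs_mul z u
        _ ≤ |z| * lam := by
            apply mul_le_mul_of_nonneg_left _ (abs_nonneg z)
            exact abs_le.2 ⟨by linarith, h⟩
    simp only [abs_zero]
    nlinarith [sq_nonneg z]

theorem thresholded_landweber_descent {m n : ℕ} (K : Matrix (Fin m) (Fin n) ℝ)
    (y : Fin m → ℝ) (lam : ℝ) (hlam : 0 ≤ lam)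
    (hK : ∀ x : Fin n → ℝ, (∑ j, (K.mulVec x j) ^ 2) ≤ ∑ i, (x i) ^ 2)
    (x : Fin n → ℝ) :
    (∑ j, (K.mulVec (fun i => softThreshold lam
        (x i + K.transpose.mulVec (y - K.mulVec x) i)) j - y j) ^ 2) +
      2 * lam * ∑ i, |softThreshold lam (x i + K.transpose.mulVec (y - K.mulVec x) i)| ≤
    (∑ j, (K.mulVec x j - y j) ^ 2) + 2 * lam * ∑ i, |x i| := by
  set w : Fin n → ℝ := K.transpose.mulVec (y - K.mulVec x) with hw
  set p : Fin n → ℝ := fun i => softThreshold lam (x i + w i) with hp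
  have hwdef : ∀ i, w i = ∑ j, K j i * (y j - K.mulVec x j) := by
    intro i
    simp [hw, Matrix.mulVec, dotProduct, Matrix.transpose_apply]
  have hKd : ∀ j, K.mulVec (fun i => p i - x i) j = K.mulVec p j - K.mulVec x j := by
    intro j
    simp [Matrix.mulVec, dotProduct, mul_sub, Finset.sum_sub_distrib]
  -- swap lemma
  have hswap : ∑ j, (K.mulVec p j - K.mulVec x j) * (K.mulVec x j - y j)
      = -∑ i, (p i - x i) * w i := by
    have e1 : ∀ j, K.mulVec p j - K.mulVec x j = ∑ i, K j i * (p i - x i) := by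
      intro j
      simp [Matrix.mulVec, dotProduct, mul_sub, Finset.sum_sub_distrib]
    calc ∑ j, (K.mulVec p j - K.mulVec x j) * (K.mulVec x j - y j)
        = ∑ j, ∑ i, K j i * (p i - x i) * (K.mulVec x j - y j) := by
          refine Finset.sum_congr rfl fun j _ => ?_
          rw [e1 j, Finset.sum_mul]
      _ = ∑ i, ∑ j, K j i * (p i - x i) * (K.mulVec x j - y j) := Finset.sum_comm
      _ = ∑ i, (p i - x i) * -(∑ j, K j i * (y j - K.mulVec x j)) := by
          refine Finset.sum_congr rfl fun i _ => ?_
          rw [mul_neg, Finset.mul_sum, ← Finset.sum_neg_distrib]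
          refine Finset.sum_congr rfl fun j _ => ?_
          ring
      _ = -∑ i, (p i - x i) * w i := by
          rw [← Finset.sum_neg_distrib]
          refine Finset.sum_congr rfl fun i _ => ?_
          rw [hwdef i]; ring
  have hC : ∑ j, (K.mulVec p j - K.mulVec x j)^2 ≤ ∑ i, (p i - x i)^2 := by
    have h := hK (fun i => p i - x i)
    calc ∑ j, (K.mulVec p j - K.mulVec x j)^2
        = ∑ j, (K.mulVec (fun i => p i - x i) j)^2 := by
          refine Finset.sum_congr rfl fun j _ => ?_
          rw [hKd j]
      _ ≤ ∑ i, (p i - x i)^2 := h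
  have hA : ∑ j, (K.mulVec p j - y j)^2
      = ∑ j, (K.mulVec x j - y j)^2 + ∑ j, (K.mulVec p j - K.mulVec x j)^2
        + 2 * ∑ j, (K.mulVec p j - K.mulVec x j) * (K.mulVec x j - y j) := by
    rw [Finset.mul_sum, ← Finset.sum_add_distrib, ← Finset.sum_add_distrib]
    refine Finset.sum_congr rfl fun j _ => ?_
    ring
  have hQ : ∑ i, (p i - (x i + w i))^2
      = ∑ i, (p i - x i)^2 - 2 * ∑ i, (p i - x i) * w i + ∑ i, (w i)^2 := by
    rw [Finset.mul_sum, ← Finset.sum_sub_distrib, ← Finset.sum_add_distrib]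
    refine Finset.sum_congr rfl fun i _ => ?_
    ring
  have hmin : ∑ i, ((p i - (x i + w i))^2 + 2*lam*|p i|)
      ≤ ∑ i, ((w i)^2 + 2*lam*|x i|) := by
    refine Finset.sum_le_sum fun i _ => ?_
    have h := softThreshold_min lam hlam (x i + w i) (x i)
    have e : (x i - (x i + w i))^2 = (w i)^2 := by ring
    simp only [hp]
    linarith [h, e.le, e.ge]
  simp_rw [Finset.sum_add_distrib, ← Finset.mul_sum] at hmin
  linarith [hA, hswap, hC, hQ, hmin]
end
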